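/- Let Ω ⊆ ℝⁿ be open and bounded, and suppose the Korn second inequality holds: ‖∇u‖_{L²} ≤ C(‖ε(u)‖_{L²} + ‖u‖_{L²}) for all u ∈ H¹(Ω)ⁿ. Let V be a closed subspace of H¹(Ω)ⁿ, with the embedding V ↪ L²(Ω)ⁿ compact, such that V contains no nonzero vector field with ε(u) = 0. Then there exists c > 0 such that ‖u‖_{H¹} ≤ c ‖ε(u)‖_{L²} for all u ∈ V. -/

import Mathlib

/-!
If `‖u‖ ≤ C (‖T u‖ + ‖K u‖)` with `K` compact and `T` injective, then `T` is bounded below.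
Otherwise there are unit vectors `uₙ` with `T uₙ → 0`; compactness of `K` makes a subsequence
of `K uₙ` converge, and then the estimate, applied to differences, makes that subsequence Cauchy.
Its limit `u` has norm one and `T u = 0`, contradicting injectivity. Korn's first inequality is
the case `T = ε`, `K = J` on `V`, where Korn's second inequality supplies the estimate.
-/

open Filter Topology

section BoundedBelow

variable {E F G : Type*}
  [NormedAddCommGroup E] [NormedSpace ℝ E]
  [NormedAddCommGroup F] [NormedSpace ℝ F]
  [NormedAddCommGroup G] [NormedSpace ℝ G]

theorem ContinuousLinearMap.antilipschitz_prod_of_norm_le_mul_add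
    (T : E →L[ℝ] F) (K : E →L[ℝ] G) {C : ℝ} (hest : ∀ u, ‖u‖ ≤ C * (‖T u‖ + ‖K u‖)) :
    AntilipschitzWith (2 * C).toNNReal (T.prod K) := by
  refine (T.prod K).antilipschitz_of_bound fun u => ?_
  have hT : ‖T u‖ ≤ ‖(T.prod K) u‖ := _root_.norm_fst_le ((T.prod K) u)
  have hK : ‖K u‖ ≤ ‖(T.prod K) u‖ := _root_.norm_snd_le ((T.prod K) u)
  rw [Real.coe_toNNReal']
  rcases le_total 0 C with hC | hC
  · calc ‖u‖ ≤ C * (‖T u‖ + ‖K u‖) := hest u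
      _ ≤ C * (2 * ‖(T.prod K) u‖) := by gcongr; linarith
      _ ≤ max (2 * C) 0 * ‖(T.prod K) u‖ := by
        rw [← mul_assoc, mul_comm C 2]; gcongr; exact le_max_left _ _
  · calc ‖u‖ ≤ C * (‖T u‖ + ‖K u‖) := hest u
      _ ≤ 0 := mul_nonpos_of_nonpos_of_nonneg hC (by positivity)
      _ ≤ max (2 * C) 0 * ‖(T.prod K) u‖ := by positivity

theorem cauchySeq_of_norm_le_mul_add (T : E →L[ℝ] F) (K : E →L[ℝ] G) {C : ℝ}
    (hest : ∀ u, ‖u‖ ≤ C * (‖T u‖ + ‖K u‖)) {u : ℕ → E}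
    (hTu : CauchySeq fun n => T (u n)) (hKu : CauchySeq fun n => K (u n)) : CauchySeq u :=
  ((T.antilipschitz_prod_of_norm_le_mul_add K hest).isUniformInducing
    (T.prod K).uniformContinuous).cauchy_map_iff.mp (hTu.prodMk hKu)

theorem ContinuousLinearMap.exists_seq_norm_eq_one_tendsto_zero (T : E →L[ℝ] F)
    (h : ¬∃ c > 0, ∀ u, ‖u‖ ≤ c * ‖T u‖) :
    ∃ u : ℕ → E, (∀ n, ‖u n‖ = 1) ∧ Tendsto (fun n => T (u n)) atTop (𝓝 0) := by
  push Not at h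
  choose v hv using fun n : ℕ => h ((n : ℝ) + 1) n.cast_add_one_pos
  have hv0 : ∀ n, v n ≠ 0 := fun n hn => by simpa [hn] using hv n
  refine ⟨fun n => ‖v n‖⁻¹ • v n, fun n => norm_smul_inv_norm (hv0 n), ?_⟩
  refine squeeze_zero_norm (fun n => ?_) tendsto_one_div_add_atTop_nhds_zero_nat
  have hpos : 0 < ‖v n‖ := norm_pos_iff.mpr (hv0 n)
  rw [map_smul, norm_smul, norm_inv, norm_norm, inv_mul_le_iff₀ hpos, mul_one_div,
    le_div_iff₀ n.cast_add_one_pos, mul_comm]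
  exact (hv n).le

theorem exists_pos_norm_le_mul_norm_of_injective_of_isCompactOperator [CompleteSpace E]
    (T : E →L[ℝ] F) (K : E →L[ℝ] G) (hT : Function.Injective T) (hK : IsCompactOperator K)
    {C : ℝ} (hest : ∀ u, ‖u‖ ≤ C * (‖T u‖ + ‖K u‖)) :
    ∃ c > 0, ∀ u, ‖u‖ ≤ c * ‖T u‖ := by
  by_contra h
  obtain ⟨u, hu1, hTu⟩ := T.exists_seq_norm_eq_one_tendsto_zero h
  obtain ⟨S, hS, hKS⟩ := hK.image_closedBall_subset_compact (f := K.toLinearMap) 1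
  have hKu : ∀ n, K (u n) ∈ S := fun n =>
    hKS ⟨u n, mem_closedBall_zero_iff.mpr (hu1 n).le, rfl⟩
  obtain ⟨y, -, φ, hφ, hKφ⟩ := hS.tendsto_subseq hKu
  obtain ⟨x, hx⟩ := cauchySeq_tendsto_of_complete <|
    cauchySeq_of_norm_le_mul_add T K hest (hTu.comp hφ.tendsto_atTop).cauchySeq hKφ.cauchySeq
  have hx1 : ‖x‖ = 1 :=
    tendsto_nhds_unique hx.norm (by simp only [hu1, tendsto_const_nhds])
  have hTx : T x = 0 :=
    tendsto_nhds_unique ((T.continuous.tendsto x).comp hx) (hTu.comp hφ.tendsto_atTop)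
  have hx0 : x = 0 := hT (by rw [hTx, map_zero])
  simp [hx0] at hx1

end BoundedBelow

/-- Korn's first inequality on a constrained closed subspace (Theorem 2.3, abstract
Sobolev setting). `X` plays the role of `H¹(Ω)ⁿ`, `grad` of `∇`, `eps` of the strain
tensor `ε`, and `J` of the embedding into `L²(Ω)ⁿ`. The `H¹` norm is controlled by
`‖∇u‖_{L²} + ‖u‖_{L²}`, Korn's second inequality
`‖∇u‖_{L²} ≤ C(‖ε(u)‖_{L²} + ‖u‖_{L²})` holds, `V` is a closed subspace on which the
`L²` embedding is compact and which contains no nonzero field with `ε(u) = 0`. Then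
`‖u‖_{H¹} ≤ c ‖ε(u)‖_{L²}` on `V`. -/
theorem korn_first_inequality_constrained
    {X Y Z W : Type*}
    [NormedAddCommGroup X] [NormedSpace ℝ X] [CompleteSpace X]
    [NormedAddCommGroup Y] [NormedSpace ℝ Y]
    [NormedAddCommGroup Z] [NormedSpace ℝ Z]
    [NormedAddCommGroup W] [NormedSpace ℝ W]
    (grad : X →L[ℝ] Y) (eps : X →L[ℝ] Z) (J : X →L[ℝ] W)
    (hnorm : ∀ u : X, ‖u‖ ≤ ‖grad u‖ + ‖J u‖)
    (C : ℝ) (hKorn : ∀ u : X, ‖grad u‖ ≤ C * (‖eps u‖ + ‖J u‖))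
    (V : Submodule ℝ X) (hVclosed : IsClosed (V : Set X))
    (hcomp : IsCompactOperator (fun u : V => J u))
    (hker : ∀ u ∈ V, eps u = 0 → u = 0) :
    ∃ c : ℝ, 0 < c ∧ ∀ u ∈ V, ‖u‖ ≤ c * ‖eps u‖ := by
  have : CompleteSpace V := hVclosed.completeSpace_coe
  have hinj : Function.Injective (eps.comp V.subtypeL) :=
    (injective_iff_map_eq_zero _).mpr fun u hu => Subtype.ext (hker u u.2 hu)
  have hest : ∀ u : V, ‖u‖ ≤ (C + 1) * (‖eps u‖ + ‖J u‖) := fun u => by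
    rw [Submodule.coe_norm]
    linarith [hnorm u, hKorn u, norm_nonneg (eps u)]
  obtain ⟨c, hc, hbound⟩ := exists_pos_norm_le_mul_norm_of_injective_of_isCompactOperator
    (eps.comp V.subtypeL) (J.comp V.subtypeL) hinj hcomp hest
  exact ⟨c, hc, fun u hu => hbound ⟨u, hu⟩⟩
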